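/- Suppose the matrix A has rank one, i.e. (a_1 d_0 + b_0 b_1)(a_0 d_1 + c_0 c_1) = (a_0 b_1 + a_1 c_0)(b_0 d_1 + c_1 d_0). If R = K·(a_1 d_0 + b_0 b_1 + K(a_0 b_1 + a_1 c_0)) / ((b_0 + K a_0)(d_0 + K c_0)) > 1, where K = (b_0 d_1 + c_1 d_0)/(a_1 d_0 + b_0 b_1), then x_{2n} → ∞, x_{2n+1} → 0, y_{2n} → ∞ and y_{2n+1} → 0 as n → ∞. -/

import Mathlib

/-!
The rank-one condition says that the second row of `A` is `K` times the first. Expanding two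
steps of the system, this makes `y_{2n+2} = K x_{2n+2}` for every `n`, whatever `x_{2n}, y_{2n}`
are: after one period the orbit lands on the ray `y = K x`. Starting from a point `(u, K u)` of
that ray, one more period gives `x = R u` (and again `y = K x`), so `x_{2n+2} = R^n x_2 → ∞`,
hence `y_{2n} → ∞`, and the odd terms `a_0/x_{2n} + b_0/y_{2n}`, `c_0/x_{2n} + d_0/y_{2n}` tend
to `0`.
-/

open Filter Topology Function

lemma Function.Periodic.apply_two_mul {α : Type*} {f : ℕ → α} (hf : Periodic f 2) (m : ℕ) :
    f (2 * m) = f 0 := by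
  simpa [mul_comm] using hf.nat_mul_eq m

lemma Function.Periodic.apply_two_mul_add_one {α : Type*} {f : ℕ → α} (hf : Periodic f 2)
    (m : ℕ) : f (2 * m + 1) = f 1 := by
  simpa [mul_comm, add_comm] using (hf.nat_mul m) 1

lemma rows_proportional_of_det_eq_zero {p q r s K : ℝ} (hp : p ≠ 0) (hdet : p * s = q * r)
    (hK : K = r / p) : r = K * p ∧ s = K * q := by
  subst hK
  refine ⟨(div_mul_cancel₀ r hp).symm, mul_left_cancel₀ hp ?_⟩
  rw [hdet]
  field_simp

lemma pos_of_rec {x y a b c d : ℕ → ℝ} (hx0 : 0 < x 0) (hy0 : 0 < y 0)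
    (hapos : ∀ n, 0 < a n) (hbpos : ∀ n, 0 < b n)
    (hcpos : ∀ n, 0 < c n) (hdpos : ∀ n, 0 < d n)
    (hxrec : ∀ n, x (n + 1) = a n / x n + b n / y n)
    (hyrec : ∀ n, y (n + 1) = c n / x n + d n / y n) (n : ℕ) : 0 < x n ∧ 0 < y n := by
  induction n with
  | zero => exact ⟨hx0, hy0⟩
  | succ k ih =>
    have := hapos k; have := hbpos k; have := hcpos k; have := hdpos k
    obtain ⟨hx, hy⟩ := ih
    rw [hxrec, hyrec]
    constructor <;> positivity

/-- With `(X, Y)` one step after `(u, v)`, the numerators of `c₁/X + d₁/Y` and `a₁/X + b₁/Y`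
are linear in `(1/u, 1/v)` with the rows of `A` as coefficients, so proportional rows give
proportional values. -/
lemma div_add_div_eq_mul_of_rows_proportional {a₀ b₀ c₀ d₀ a₁ b₁ c₁ d₁ K u v : ℝ}
    (hX : a₀ / u + b₀ / v ≠ 0) (hY : c₀ / u + d₀ / v ≠ 0)
    (h₁ : b₀ * d₁ + c₁ * d₀ = K * (a₁ * d₀ + b₀ * b₁))
    (h₂ : a₀ * d₁ + c₀ * c₁ = K * (a₀ * b₁ + a₁ * c₀)) :
    c₁ / (a₀ / u + b₀ / v) + d₁ / (c₀ / u + d₀ / v) =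
      K * (a₁ / (a₀ / u + b₀ / v) + b₁ / (c₀ / u + d₀ / v)) := by
  rw [div_add_div _ _ hX hY, div_add_div _ _ hX hY, mul_div_assoc']
  congr 1
  linear_combination u⁻¹ * h₂ + v⁻¹ * h₁

lemma div_add_div_on_ray {a₀ b₀ c₀ d₀ a₁ b₁ K u : ℝ} (hu : u ≠ 0) (hK : K ≠ 0)
    (hb : b₀ + K * a₀ ≠ 0) (hd : d₀ + K * c₀ ≠ 0) :
    a₁ / (a₀ / u + b₀ / (K * u)) + b₁ / (c₀ / u + d₀ / (K * u)) =
      K * (a₁ * d₀ + b₀ * b₁ + K * (a₀ * b₁ + a₁ * c₀)) /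
        ((b₀ + K * a₀) * (d₀ + K * c₀)) * u := by
  have hX : a₀ / u + b₀ / (K * u) = (b₀ + K * a₀) / (K * u) := by field_simp; ring
  have hY : c₀ / u + d₀ / (K * u) = (d₀ + K * c₀) / (K * u) := by field_simp; ring
  rw [hX, hY]
  field_simp
  ring

lemma tendsto_atTop_of_mul_succ {u : ℕ → ℝ} {R : ℝ} (hR : 1 < R) (h0 : 0 < u 0)
    (h : ∀ n, u (n + 1) = R * u n) : Tendsto u atTop atTop := by
  have hpow : ∀ n, u n = R ^ n * u 0 := by
    intro n
    induction n with
    | zero => simp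
    | succ k ih => rw [h, ih, pow_succ]; ring
  simpa only [← hpow] using (tendsto_pow_atTop_atTop_of_one_lt hR).atTop_mul_const h0

lemma tendsto_div_add_div_zero {α : Type*} {l : Filter α} {u v : α → ℝ} (p q : ℝ)
    (hu : Tendsto u l atTop) (hv : Tendsto v l atTop) :
    Tendsto (fun n => p / u n + q / v n) l (𝓝 0) := by
  simpa using (tendsto_const_nhds.div_atTop hu).add (tendsto_const_nhds.div_atTop hv)

theorem stmt_10
    (x y a b c d : ℕ → ℝ)
    (hx0 : 0 < x 0) (hy0 : 0 < y 0)
    (hapos : ∀ n, 0 < a n) (hbpos : ∀ n, 0 < b n)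
    (hcpos : ∀ n, 0 < c n) (hdpos : ∀ n, 0 < d n)
    (haper : ∀ n, a (n + 2) = a n) (hbper : ∀ n, b (n + 2) = b n)
    (hcper : ∀ n, c (n + 2) = c n) (hdper : ∀ n, d (n + 2) = d n)
    (hxrec : ∀ n, x (n + 1) = a n / x n + b n / y n)
    (hyrec : ∀ n, y (n + 1) = c n / x n + d n / y n)
    (hrank : (a 1 * d 0 + b 0 * b 1) * (a 0 * d 1 + c 0 * c 1) =
      (a 0 * b 1 + a 1 * c 0) * (b 0 * d 1 + c 1 * d 0))
    (K : ℝ) (hK : K = (b 0 * d 1 + c 1 * d 0) / (a 1 * d 0 + b 0 * b 1))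
    (M : ℝ) (hM : M = a 1 * d 0 + b 0 * b 1 + K * (a 0 * b 1 + a 1 * c 0))
    (R : ℝ) (hR : R = K * M / ((b 0 + K * a 0) * (d 0 + K * c 0)))
    (hRgt : 1 < R)
    : Tendsto (fun n => x (2 * n)) atTop atTop ∧
      Tendsto (fun n => x (2 * n + 1)) atTop (nhds 0) ∧
      Tendsto (fun n => y (2 * n)) atTop atTop ∧
      Tendsto (fun n => y (2 * n + 1)) atTop (nhds 0) := by
  have hpos := pos_of_rec hx0 hy0 hapos hbpos hcpos hdpos hxrec hyrec
  have := hapos 0; have := hapos 1; have := hbpos 0; have := hbpos 1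
  have := hcpos 0; have := hcpos 1; have := hdpos 0; have := hdpos 1
  have hKpos : 0 < K := hK ▸ by positivity
  obtain ⟨h₁, h₂⟩ := rows_proportional_of_det_eq_zero (by positivity) hrank hK
  have hxodd m : x (2 * m + 1) = a 0 / x (2 * m) + b 0 / y (2 * m) := by
    rw [hxrec, Periodic.apply_two_mul haper, Periodic.apply_two_mul hbper]
  have hyodd m : y (2 * m + 1) = c 0 / x (2 * m) + d 0 / y (2 * m) := by
    rw [hyrec, Periodic.apply_two_mul hcper, Periodic.apply_two_mul hdper]
  have hxeven m : x (2 * m + 2) = a 1 / x (2 * m + 1) + b 1 / y (2 * m + 1) := by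
    rw [hxrec, Periodic.apply_two_mul_add_one haper, Periodic.apply_two_mul_add_one hbper]
  have hyeven m : y (2 * m + 2) = c 1 / x (2 * m + 1) + d 1 / y (2 * m + 1) := by
    rw [hyrec, Periodic.apply_two_mul_add_one hcper, Periodic.apply_two_mul_add_one hdper]
  have hray m : y (2 * m + 2) = K * x (2 * m + 2) := by
    rw [hxeven, hyeven, hxodd, hyodd]
    exact div_add_div_eq_mul_of_rows_proportional (by rw [← hxodd]; exact (hpos _).1.ne')
      (by rw [← hyodd]; exact (hpos _).2.ne') h₁ h₂
  have hgrowth m : x (2 * (m + 1) + 2) = R * x (2 * m + 2) := by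
    rw [hxeven, hxodd, hyodd, mul_add_one 2 m, hray,
      div_add_div_on_ray (hpos _).1.ne' hKpos.ne' (by positivity) (by positivity), ← hM, ← hR]
  have hxe : Tendsto (fun n => x (2 * n)) atTop atTop :=
    (tendsto_add_atTop_iff_nat 1).mp (tendsto_atTop_of_mul_succ hRgt (hpos 2).1 hgrowth)
  have hye : Tendsto (fun n => y (2 * n)) atTop atTop := by
    refine (tendsto_add_atTop_iff_nat 1).mp ?_
    simpa only [mul_add, mul_one, hray] using
      (tendsto_add_atTop_iff_nat 1).mpr hxe |>.const_mul_atTop hKpos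
  exact ⟨hxe, (tendsto_div_add_div_zero _ _ hxe hye).congr fun m => (hxodd m).symm, hye,
    (tendsto_div_add_div_zero _ _ hxe hye).congr fun m => (hyodd m).symm⟩
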